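/- arXiv:1909.11783 — 8 statements merged into one kernel-verified Lean document; each statement's English description precedes it below -/
import Mathlib

section
/- If f is a non-decreasing set function on subsets of a finite set V with f(∅)=0 and total curvature c_f, then for any disjoint subsets A, B ⊆ V, f(A ∪ B) ≥ (1 - c_f)·(f(A) + f(B)). -/
theorem stmt_0 {α : Type*} [DecidableEq α] (V : Finset α) (f : Finset α → ℝ) (c : ℝ)
    (hmono : ∀ A B : Finset α, A ⊆ B → B ⊆ V → f A ≤ f B)
    (hempty : f ∅ = 0)
    (hc0 : 0 ≤ c) (hc1 : c ≤ 1)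
    (hcurv : ∀ v ∈ V, ∀ A B : Finset α, A ⊆ V.erase v → B ⊆ V.erase v →
      f (insert v A) - f A ≥ (1 - c) * (f (insert v B) - f B))
    (A B : Finset α) (hA : A ⊆ V) (hB : B ⊆ V) (hdisj : Disjoint A B) :
    f (A ∪ B) ≥ (1 - c) * (f A + f B) := by
  have key : ∀ A : Finset α, A ⊆ V → Disjoint A B → f (B ∪ A) - f B ≥ (1 - c) * f A := by
    intro A
    induction A using Finset.induction_on with
    | empty => intro _ _; simp [hempty]
    | @insert v A' hv ih =>
      intro hsub hdis
      have hvV : v ∈ V := hsub (Finset.mem_insert_self v A')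
      have hA'V : A' ⊆ V := fun x hx => hsub (Finset.mem_insert_of_mem hx)
      have hvB : v ∉ B := fun h => (Finset.disjoint_left.mp hdis (Finset.mem_insert_self v A')) h
      have hdis' : Disjoint A' B := hdis.mono_left (Finset.subset_insert v A')
      have h1 : B ∪ A' ⊆ V.erase v := by
        intro x hx
        rw [Finset.mem_erase]
        rcases Finset.mem_union.mp hx with h | h
        · exact ⟨fun he => hvB (he ▸ h), hB h⟩
        · exact ⟨fun he => hv (he ▸ h), hA'V h⟩
      have h2 : A' ⊆ V.erase v := by
        intro x hx
        exact Finset.mem_erase.mpr ⟨fun he => hv (he ▸ hx), hA'V hx⟩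
      have hstep := hcurv v hvV (B ∪ A') A' h1 h2
      have hih := ih hA'V hdis'
      have heq : B ∪ insert v A' = insert v (B ∪ A') := Finset.union_insert v B A'
      rw [heq]
      have : f (insert v (B ∪ A')) - f B =
          (f (insert v (B ∪ A')) - f (B ∪ A')) + (f (B ∪ A') - f B) := by ring
      rw [this]
      calc (f (insert v (B ∪ A')) - f (B ∪ A')) + (f (B ∪ A') - f B)
          ≥ (1 - c) * (f (insert v A') - f A') + (1 - c) * f A' := by
            linarith [hstep, hih]
        _ = (1 - c) * f (insert v A') := by ring
  have hkey := key A hA hdisj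
  have hB0 : 0 ≤ f B := hempty ▸ hmono ∅ B (Finset.empty_subset B) hB
  have hBc : (1 - c) * f B ≤ f B := by nlinarith
  have heq : A ∪ B = B ∪ A := Finset.union_comm A B
  rw [heq]
  nlinarith [hkey, hBc]
end

section
/- If f is a non-decreasing set function on subsets of a finite set V with f(∅)=0 and total curvature c_f, then for any disjoint subsets A, B ⊆ V, f(A ∪ B) ≥ (1 - c_f)·(f(A) + Σ_{b ∈ B} f({b})). -/
theorem stmt_1 {α : Type*} [DecidableEq α] (V : Finset α) (f : Finset α → ℝ) (c : ℝ)
    (hmono : ∀ A B : Finset α, A ⊆ B → B ⊆ V → f A ≤ f B)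
    (hempty : f ∅ = 0)
    (hc0 : 0 ≤ c) (hc1 : c ≤ 1)
    (hcurv : ∀ v ∈ V, ∀ A B : Finset α, A ⊆ V.erase v → B ⊆ V.erase v →
      f (insert v A) - f A ≥ (1 - c) * (f (insert v B) - f B))
    (A B : Finset α) (hA : A ⊆ V) (hB : B ⊆ V) (hdisj : Disjoint A B) :
    f (A ∪ B) ≥ (1 - c) * (f A + ∑ b ∈ B, f {b}) := by
  induction B using Finset.induction_on with
  | empty =>
    simp only [Finset.union_empty, Finset.sum_empty, add_zero]
    have h0 : 0 ≤ f A := by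
      have := hmono ∅ A (Finset.empty_subset A) hA
      linarith
    nlinarith
  | insert _ _ hbB' =>
    rename_i b B' ih
    have hbV : b ∈ V := hB (Finset.mem_insert_self b B')
    have hB'V : B' ⊆ V := fun x hx => hB (Finset.mem_insert_of_mem hx)
    have hdisj' : Disjoint A B' := hdisj.mono_right (Finset.subset_insert b B')
    have hbA : b ∉ A := fun h => (Finset.disjoint_left.mp hdisj h) (Finset.mem_insert_self b B')
    have ih' := ih hB'V hdisj'
    have hsub1 : A ∪ B' ⊆ V.erase b := by
      intro x hx
      rcases Finset.mem_union.mp hx with h | h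
      · exact Finset.mem_erase.mpr ⟨fun he => hbA (he ▸ h), hA h⟩
      · exact Finset.mem_erase.mpr ⟨fun he => hbB' (he ▸ h), hB'V h⟩
    have hcur := hcurv b hbV (A ∪ B') ∅ hsub1 (Finset.empty_subset _)
    have hunion : A ∪ insert b B' = insert b (A ∪ B') := by
      ext x; simp [Finset.mem_insert, Finset.mem_union]
    have hsum : ∑ x ∈ insert b B', f {x} = f {b} + ∑ x ∈ B', f {x} :=
      Finset.sum_insert hbB'
    rw [hunion, hsum]
    have heq : insert b (∅ : Finset α) = {b} := rfl
    rw [hempty, heq] at hcur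
    nlinarith
end

section
/- If f is a non-decreasing set function on subsets of a finite set V with f(∅)=0 and total curvature c_f, then for any A, B ⊆ V with A \ B nonempty, f(A) + (1 - c_f)·f(B) ≥ (1 - c_f)·f(A ∪ B) + f(A ∩ B). -/
theorem stmt_2 {α : Type*} [DecidableEq α] (V : Finset α) (f : Finset α → ℝ) (c : ℝ)
    (hmono : ∀ A B : Finset α, A ⊆ B → B ⊆ V → f A ≤ f B)
    (hempty : f ∅ = 0)
    (hc0 : 0 ≤ c) (hc1 : c ≤ 1)
    (hcurv : ∀ v ∈ V, ∀ A B : Finset α, A ⊆ V.erase v → B ⊆ V.erase v →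
      f (insert v A) - f A ≥ (1 - c) * (f (insert v B) - f B))
    (A B : Finset α) (hA : A ⊆ V) (hB : B ⊆ V) (hne : (A \ B).Nonempty) :
    f A + (1 - c) * f B ≥ (1 - c) * f (A ∪ B) + f (A ∩ B) := by
  have key : ∀ D : Finset α, D ⊆ A \ B →
      f ((A ∩ B) ∪ D) - f (A ∩ B) ≥ (1 - c) * (f (B ∪ D) - f B) := by
    intro D
    induction D using Finset.induction_on with
    | empty => simp
    | @insert v D hv ih =>
      intro hsub
      have hvAB : v ∈ A \ B := hsub (Finset.mem_insert_self v D)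
      have hvA : v ∈ A := (Finset.mem_sdiff.mp hvAB).1
      have hvB : v ∉ B := (Finset.mem_sdiff.mp hvAB).2
      have hDsub : D ⊆ A \ B := fun x hx => hsub (Finset.mem_insert_of_mem hx)
      have hD : D ⊆ V.erase v := by
        intro x hx
        have hxAB := hDsub hx
        refine Finset.mem_erase.mpr ⟨?_, hA (Finset.mem_sdiff.mp hxAB).1⟩
        rintro rfl; exact hv hx
      have hX : (A ∩ B) ∪ D ⊆ V.erase v := by
        intro x hx
        rcases Finset.mem_union.mp hx with h | h
        · refine Finset.mem_erase.mpr ⟨?_, hA (Finset.mem_inter.mp h).1⟩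
          rintro rfl; exact hvB (Finset.mem_inter.mp h).2
        · exact hD h
      have hY : B ∪ D ⊆ V.erase v := by
        intro x hx
        rcases Finset.mem_union.mp hx with h | h
        · refine Finset.mem_erase.mpr ⟨?_, hB h⟩
          rintro rfl; exact hvB h
        · exact hD h
      have hstep := hcurv v (hA hvA) ((A ∩ B) ∪ D) (B ∪ D) hX hY
      have e1 : insert v ((A ∩ B) ∪ D) = (A ∩ B) ∪ insert v D := by
        simp [Finset.insert_union, Finset.union_insert]
      have e2 : insert v (B ∪ D) = B ∪ insert v D := by
        simp [Finset.union_insert]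
      rw [e1, e2] at hstep
      have hih := ih hDsub
      nlinarith [hstep, hih]
  have h := key (A \ B) (subset_refl _)
  have e3 : A ∩ B ∪ A \ B = A := by ext x; simp [Finset.mem_union, Finset.mem_inter, Finset.mem_sdiff]; tauto
  rw [e3, Finset.union_sdiff_self_eq_union] at h
  rw [Finset.union_comm B A] at h
  linarith
end

section
/- If f is a non-decreasing set function on subsets of a finite set V with f(∅)=0 and total curvature c_f, then for any disjoint subsets A, B ⊆ V, f(A) + Σ_{b ∈ B} f({b}) ≥ (1 - c_f)·f(A ∪ B). -/
theorem stmt_3 {α : Type*} [DecidableEq α] (V : Finset α) (f : Finset α → ℝ) (c : ℝ)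
    (hmono : ∀ A B : Finset α, A ⊆ B → B ⊆ V → f A ≤ f B)
    (hempty : f ∅ = 0)
    (hc0 : 0 ≤ c) (hc1 : c ≤ 1)
    (hcurv : ∀ v ∈ V, ∀ A B : Finset α, A ⊆ V.erase v → B ⊆ V.erase v →
      f (insert v A) - f A ≥ (1 - c) * (f (insert v B) - f B))
    (A B : Finset α) (hA : A ⊆ V) (hB : B ⊆ V) (hdisj : Disjoint A B) :
    f A + ∑ b ∈ B, f {b} ≥ (1 - c) * f (A ∪ B) := by
  have key : ∀ B : Finset α, B ⊆ V → Disjoint A B →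
      ∑ b ∈ B, f {b} ≥ (1 - c) * (f (A ∪ B) - f A) := by
    intro B
    induction B using Finset.induction_on with
    | empty => intro _ _; simp
    | insert _ _ hb _ =>
      rename_i b B' ih
      intro hBV hdis
      have hbV : b ∈ V := hBV (Finset.mem_insert_self b B')
      have hB'V : B' ⊆ V := (Finset.subset_insert b B').trans hBV
      have hdis' : Disjoint A B' := hdis.mono_right (Finset.subset_insert b B')
      have hbA : b ∉ A := fun h => (Finset.disjoint_left.mp hdis h) (Finset.mem_insert_self b B')
      have hsub : A ∪ B' ⊆ V.erase b := by
        intro x hx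
        refine Finset.mem_erase.mpr ⟨?_, (Finset.union_subset hA hB'V) hx⟩
        rintro rfl
        rcases Finset.mem_union.mp hx with h | h
        · exact hbA h
        · exact hb h
      have hcb := hcurv b hbV (∅) (A ∪ B') (Finset.empty_subset _) hsub
      have hfb : f {b} ≥ (1 - c) * (f (insert b (A ∪ B')) - f (A ∪ B')) := by
        simpa [hempty] using hcb
      have hih := ih hB'V hdis'
      rw [Finset.sum_insert hb]
      have hU : A ∪ insert b B' = insert b (A ∪ B') := by
        ext x; simp [Finset.mem_insert, Finset.mem_union, or_left_comm]
      rw [hU]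
      nlinarith [hfb, hih]
  have h := key B hB hdisj
  have hA0 : 0 ≤ f A := by
    have := hmono ∅ A (Finset.empty_subset _) hA
    linarith
  nlinarith
end

section
/- If f is non-decreasing submodular with f(∅)=0 and curvature κ_f, then for any disjoint A, B ⊆ V, f(A ∪ B) ≥ (1 - κ_f)·(f(A) + f(B)). -/
theorem stmt_5 {α : Type*} [DecidableEq α] (V : Finset α) (f : Finset α → ℝ) (κ : ℝ)
    (hmono : ∀ A B : Finset α, A ⊆ B → B ⊆ V → f A ≤ f B)
    (hempty : f ∅ = 0)
    (hsub : ∀ (A B : Finset α) (v : α), A ⊆ B → B ⊆ V → v ∈ V →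
      f (insert v A) - f A ≥ f (insert v B) - f B)
    (hne : ∀ v ∈ V, f {v} ≠ 0)
    (hκ0 : 0 ≤ κ) (hκ1 : κ ≤ 1)
    (hcurv : ∀ v ∈ V, ∀ A B : Finset α, A ⊆ V.erase v → B ⊆ V.erase v →
      f (insert v A) - f A ≥ (1 - κ) * (f (insert v B) - f B))
    (A B : Finset α) (hA : A ⊆ V) (hB : B ⊆ V) (hdisj : Disjoint A B) :
    f (A ∪ B) ≥ (1 - κ) * (f A + f B) := by
  have key : ∀ S : Finset α, S ⊆ V → Disjoint S B → f (S ∪ B) - f B ≥ (1 - κ) * f S := by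
    intro S
    induction S using Finset.induction_on with
    | empty => intro _ _; simp [hempty]
    | @insert a S' ha ih =>
      intro hSV hSd
      have haV : a ∈ V := hSV (Finset.mem_insert_self a S')
      have hS'V : S' ⊆ V := fun x hx => hSV (Finset.mem_insert_of_mem hx)
      have haB : a ∉ B := Finset.disjoint_left.mp hSd (Finset.mem_insert_self a S')
      have hS'd : Disjoint S' B := Finset.disjoint_of_subset_left
        (Finset.subset_insert a S') hSd
      have hsub1 : S' ∪ B ⊆ V.erase a := by
        intro x hx
        rcases Finset.mem_union.mp hx with h | h
        · exact Finset.mem_erase.mpr ⟨fun he => ha (he ▸ h), hS'V h⟩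
        · exact Finset.mem_erase.mpr ⟨fun he => haB (he ▸ h), hB h⟩
      have hsub2 : S' ⊆ V.erase a := fun x hx =>
        Finset.mem_erase.mpr ⟨fun he => ha (he ▸ hx), hS'V hx⟩
      have hc := hcurv a haV (S' ∪ B) S' hsub1 hsub2
      have hih := ih hS'V hS'd
      have heq : insert a S' ∪ B = insert a (S' ∪ B) := by
        ext x; simp [Finset.mem_insert, Finset.mem_union, or_assoc]
      rw [heq]
      nlinarith [hc, hih]
  have hfB : 0 ≤ f B := by
    have := hmono ∅ B (Finset.empty_subset B) hB
    linarith [hempty ▸ this]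
  have hk := key A hA hdisj
  nlinarith [hk, hfB]
end

section
/- Let f : 2^V → ℝ be non-decreasing with f(∅)=0 and total curvature c_f. Suppose a set A of cardinality α is partitioned as A = S₁ ∪ S₂ with S₁ ∩ S₂ = ∅, |S₁| = β, and f({v}) ≥ f({v'}) for every v ∈ S₁ and v' ∈ S₂ (S₁ contains the β elements of A with largest singleton values). Then for any B ⊆ A with |B| ≤ β, f(A \ B) ≥ (1 - c_f)²·f(S₂). -/
open Finset

lemma aux_lower {α : Type*} [DecidableEq α] (V : Finset α) (f : Finset α → ℝ) (c : ℝ)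
    (hempty : f ∅ = 0)
    (hcurv : ∀ v ∈ V, ∀ A B : Finset α, A ⊆ V.erase v → B ⊆ V.erase v →
      f (insert v A) - f A ≥ (1 - c) * (f (insert v B) - f B))
    (T : Finset α) (hT : T ⊆ V) :
    ∀ U : Finset α, U ⊆ V → Disjoint T U →
      f T + (1 - c) * ∑ u ∈ U, f {u} ≤ f (T ∪ U) := by
  intro U
  induction U using Finset.induction_on with
  | empty => intro _ _; simp
  | @insert u U' hu ih =>
    intro hUV hdisj
    have hu'V : U' ⊆ V := (Finset.subset_insert u U').trans hUV
    have huV : u ∈ V := hUV (mem_insert_self u U')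
    have hdisj' : Disjoint T U' := hdisj.mono_right (Finset.subset_insert u U')
    have hsub : T ∪ U' ⊆ V.erase u := by
      intro x hx
      rw [Finset.mem_erase]
      constructor
      · rintro rfl
        rcases Finset.mem_union.1 hx with h | h
        · exact (Finset.disjoint_left.1 hdisj h (mem_insert_self _ _))
        · exact hu h
      · rcases Finset.mem_union.1 hx with h | h
        · exact hT h
        · exact hu'V h
    have hcu := hcurv u huV (T ∪ U') ∅ hsub (Finset.empty_subset _)
    have hse : insert u (∅ : Finset α) = {u} := by simp
    rw [hse, hempty] at hcu
    rw [Finset.sum_insert hu]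
    have h1 : T ∪ insert u U' = insert u (T ∪ U') := by
      ext x; simp [Finset.mem_insert, Finset.mem_union, or_left_comm]
    rw [h1]
    have hih := ih hu'V hdisj'
    nlinarith [hcu, hih]

lemma aux_upper {α : Type*} [DecidableEq α] (V : Finset α) (f : Finset α → ℝ) (c : ℝ)
    (hempty : f ∅ = 0)
    (hcurv : ∀ v ∈ V, ∀ A B : Finset α, A ⊆ V.erase v → B ⊆ V.erase v →
      f (insert v A) - f A ≥ (1 - c) * (f (insert v B) - f B))
    (T : Finset α) (hT : T ⊆ V) :
    ∀ U : Finset α, U ⊆ V → Disjoint T U →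
      (1 - c) * (f (T ∪ U) - f T) ≤ ∑ u ∈ U, f {u} := by
  intro U
  induction U using Finset.induction_on with
  | empty => intro _ _; simp
  | @insert u U' hu ih =>
    intro hUV hdisj
    have hu'V : U' ⊆ V := (Finset.subset_insert u U').trans hUV
    have huV : u ∈ V := hUV (mem_insert_self u U')
    have hdisj' : Disjoint T U' := hdisj.mono_right (Finset.subset_insert u U')
    have hsub : T ∪ U' ⊆ V.erase u := by
      intro x hx
      rw [Finset.mem_erase]
      constructor
      · rintro rfl
        rcases Finset.mem_union.1 hx with h | h
        · exact (Finset.disjoint_left.1 hdisj h (mem_insert_self _ _))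
        · exact hu h
      · rcases Finset.mem_union.1 hx with h | h
        · exact hT h
        · exact hu'V h
    have hcu := hcurv u huV ∅ (T ∪ U') (Finset.empty_subset _) hsub
    have hse : insert u (∅ : Finset α) = {u} := by simp
    rw [hse, hempty] at hcu
    rw [Finset.sum_insert hu]
    have h1 : T ∪ insert u U' = insert u (T ∪ U') := by
      ext x; simp [Finset.mem_insert, Finset.mem_union, or_left_comm]
    rw [h1]
    have hih := ih hu'V hdisj'
    nlinarith [hcu, hih]

theorem stmt_8 {α : Type*} [DecidableEq α] (V : Finset α) (f : Finset α → ℝ) (c : ℝ)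
    (hmono : ∀ A B : Finset α, A ⊆ B → B ⊆ V → f A ≤ f B)
    (hempty : f ∅ = 0)
    (hc0 : 0 ≤ c) (hc1 : c ≤ 1)
    (hcurv : ∀ v ∈ V, ∀ A B : Finset α, A ⊆ V.erase v → B ⊆ V.erase v →
      f (insert v A) - f A ≥ (1 - c) * (f (insert v B) - f B))
    (a b : ℕ) (S₁ S₂ A : Finset α) (hAV : A ⊆ V)
    (hApart : A = S₁ ∪ S₂) (hSdisj : Disjoint S₁ S₂)
    (hAcard : A.card = a) (hS₁card : S₁.card = b)
    (hbait : ∀ v ∈ S₁, ∀ v' ∈ S₂, f {v} ≥ f {v'})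
    (B : Finset α) (hBA : B ⊆ A) (hBcard : B.card ≤ b) :
    f (A \ B) ≥ (1 - c) ^ 2 * f S₂ := by
  have hS₁A : S₁ ⊆ A := hApart ▸ Finset.subset_union_left
  have hS₂A : S₂ ⊆ A := hApart ▸ Finset.subset_union_right
  have hS₁V : S₁ ⊆ V := hS₁A.trans hAV
  have hS₂V : S₂ ⊆ V := hS₂A.trans hAV
  set R : Finset α := B ∩ S₂ with hR
  set C : Finset α := S₂ \ B with hC
  have hCR : C ∪ R = S₂ := by
    ext x; simp [hC, hR, Finset.mem_union, Finset.mem_sdiff, Finset.mem_inter]; tauto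
  have hRS₂ : R ⊆ S₂ := Finset.inter_subset_right
  have hCS₂ : C ⊆ S₂ := Finset.sdiff_subset
  -- cardinality: |S₁ \ B| ≥ |R|
  have hcard1 : (S₁ \ B).card + (S₁ ∩ B).card = S₁.card := Finset.card_sdiff_add_card_inter S₁ B
  have hB12 : (B ∩ S₁) ∪ (B ∩ S₂) = B := by
    ext x
    simp only [Finset.mem_union, Finset.mem_inter]
    constructor
    · tauto
    · intro hx
      have := hBA hx
      rw [hApart, Finset.mem_union] at this
      tauto
  have hBdisj : Disjoint (B ∩ S₁) (B ∩ S₂) :=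
    (hSdisj.mono Finset.inter_subset_right Finset.inter_subset_right)
  have hcard2 : (B ∩ S₁).card + (B ∩ S₂).card = B.card := by
    rw [← Finset.card_union_of_disjoint hBdisj, hB12]
  have hinterBS : (S₁ ∩ B).card = (B ∩ S₁).card := by rw [Finset.inter_comm]
  have hRcard : R.card ≤ (S₁ \ B).card := by
    have : (B ∩ S₂).card ≤ (S₁ \ B).card := by omega
    simpa [hR] using this
  obtain ⟨U, hUsub, hUcard⟩ := Finset.exists_subset_card_eq hRcard
  have hUS₁ : U ⊆ S₁ := hUsub.trans Finset.sdiff_subset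
  have hUV : U ⊆ V := hUS₁.trans hS₁V
  have hCV : C ⊆ V := hCS₂.trans hS₂V
  have hRV : R ⊆ V := hRS₂.trans hS₂V
  -- nonnegativity
  have hnonneg : ∀ X : Finset α, X ⊆ V → 0 ≤ f X := fun X hX => by
    have := hmono ∅ X (Finset.empty_subset _) hX
    linarith [this]
  -- sum comparison
  have hsum : ∑ r ∈ R, f {r} ≤ ∑ u ∈ U, f {u} := by
    rcases R.eq_empty_or_nonempty with hRe | hRne
    · rw [hRe]
      simp only [Finset.sum_empty]
      exact Finset.sum_nonneg fun u hu => hnonneg {u} (by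
        intro x hx; rw [Finset.mem_singleton] at hx; exact hUV (hx ▸ hu))
    · have hUne : U.Nonempty := by
        rw [← Finset.card_pos] at hRne ⊢; omega
      obtain ⟨u₀, hu₀U, hu₀min⟩ := Finset.exists_min_image U (fun u => f {u}) hUne
      have h1 : ∑ r ∈ R, f {r} ≤ R.card * f {u₀} := by
        calc ∑ r ∈ R, f {r} ≤ ∑ _r ∈ R, f {u₀} :=
              Finset.sum_le_sum fun r hr => hbait u₀ (hUS₁ hu₀U) r (hRS₂ hr)
          _ = R.card * f {u₀} := by rw [Finset.sum_const, nsmul_eq_mul]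
      have h2 : (U.card : ℝ) * f {u₀} ≤ ∑ u ∈ U, f {u} := by
        calc (U.card : ℝ) * f {u₀} = ∑ _u ∈ U, f {u₀} := by rw [Finset.sum_const, nsmul_eq_mul]
          _ ≤ ∑ u ∈ U, f {u} := Finset.sum_le_sum fun u hu => hu₀min u hu
      rw [hUcard] at h2
      linarith
  -- lower bound
  have hdCU : Disjoint C U :=
    (hSdisj.symm.mono hCS₂ hUS₁)
  have hlow := aux_lower V f c hempty hcurv C hCV U hUV hdCU
  -- upper bound
  have hdCR : Disjoint C R := by
    rw [hC, hR]
    exact Finset.disjoint_left.2 fun x hx hx' =>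
      (Finset.mem_sdiff.1 hx).2 (Finset.mem_inter.1 hx').1
  have hup := aux_upper V f c hempty hcurv C hCV R hRV hdCR
  rw [hCR] at hup
  -- monotonicity to A \ B
  have hCUAB : C ∪ U ⊆ A \ B := by
    intro x hx
    rw [Finset.mem_sdiff]
    rcases Finset.mem_union.1 hx with h | h
    · have := Finset.mem_sdiff.1 h
      exact ⟨hS₂A this.1, this.2⟩
    · have := Finset.mem_sdiff.1 (hUsub h)
      exact ⟨hS₁A this.1, this.2⟩
  have hABV : A \ B ⊆ V := Finset.sdiff_subset.trans hAV
  have hmon := hmono (C ∪ U) (A \ B) hCUAB hABV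
  have hCnn : 0 ≤ f C := hnonneg C hCV
  have hSRnn : 0 ≤ ∑ r ∈ R, f {r} :=
    Finset.sum_nonneg fun r hr => hnonneg {r} (by
      intro x hx; rw [Finset.mem_singleton] at hx; exact hRV (hx ▸ hr))
  have hd0 : 0 ≤ 1 - c := by linarith
  have hd1 : 1 - c ≤ 1 := by linarith
  nlinarith [mul_le_mul_of_nonneg_left hup hd0, mul_le_mul_of_nonneg_left hsum hd0,
    hlow, hmon, hCnn, hSRnn, hd0, hd1, mul_le_mul_of_nonneg_right hd1 hCnn]
end

section
/- One-step RAM guarantee for c_f-submodular f (T = 1): Let f be non-decreasing with f(∅)=0 and total curvature c_f. Let S₁ consist of β elements of V with the largest singleton values f({v}), and let S₂ ⊆ V \ S₁ with |S₂| = α - β satisfy f(S₂) ≥ (1 - c_f)·max{f(P) : P ⊆ V \ S₁, |P| ≤ α - β}. Set A = S₁ ∪ S₂. Then min over B ⊆ A with |B| ≤ β of f(A \ B) ≥ (1 - c_f)³ · [max over A' ⊆ V, |A'| ≤ α of min over B' ⊆ A' with |B'| ≤ β of f(A' \ B')]. -/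
theorem stmt_14 {γ : Type*} [DecidableEq γ] (V : Finset γ) (f : Finset γ → ℝ) (c : ℝ)
    (hmono : ∀ A B : Finset γ, A ⊆ B → B ⊆ V → f A ≤ f B)
    (hempty : f ∅ = 0)
    (hc0 : 0 ≤ c) (hc1 : c ≤ 1)
    (hcurv : ∀ v ∈ V, ∀ X Y : Finset γ, X ⊆ V.erase v → Y ⊆ V.erase v →
      f (insert v X) - f X ≥ (1 - c) * (f (insert v Y) - f Y))
    (a b : ℕ) (hba : b ≤ a) (haV : a ≤ V.card)
    (S₁ S₂ : Finset γ) (hS₁V : S₁ ⊆ V) (hS₁card : S₁.card = b)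
    (hbait : ∀ v ∈ S₁, ∀ v' ∈ V \ S₁, f {v} ≥ f {v'})
    (hS₂ : S₂ ⊆ V \ S₁) (hS₂card : S₂.card = a - b)
    (hgreedy : ∀ P ⊆ V \ S₁, P.card ≤ a - b → f S₂ ≥ (1 - c) * f P) :
    ((S₁ ∪ S₂).powerset.filter (fun B => B.card ≤ b)).inf' ⟨∅, Finset.mem_filter.mpr ⟨Finset.empty_mem_powerset _, by simp⟩⟩
      (fun B => f ((S₁ ∪ S₂) \ B)) ≥
    (1 - c) ^ 3 *
      (V.powerset.filter (fun A' => A'.card ≤ a)).sup' ⟨∅, Finset.mem_filter.mpr ⟨Finset.empty_mem_powerset _, by simp⟩⟩ (fun A' =>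
        (A'.powerset.filter (fun B' => B'.card ≤ b)).inf' ⟨∅, Finset.mem_filter.mpr ⟨Finset.empty_mem_powerset _, by simp⟩⟩ (fun B' => f (A' \ B'))) := by
  classical
  have h1c : (0:ℝ) ≤ 1 - c := by linarith
  have hS₂V : S₂ ⊆ V := hS₂.trans Finset.sdiff_subset
  have hdisj : ∀ x ∈ S₂, x ∉ S₁ := fun x hx => (Finset.mem_sdiff.mp (hS₂ hx)).2
  have hAV : S₁ ∪ S₂ ⊆ V := Finset.union_subset hS₁V hS₂V
  have hnonneg : ∀ X ⊆ V, 0 ≤ f X := fun X hX =>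
    hempty ▸ hmono ∅ X (Finset.empty_subset _) hX
  -- Lemma A : adding E to X gains at least (1-c) * sum of singleton values
  have lemA : ∀ E : Finset γ, E ⊆ V → ∀ X : Finset γ, X ⊆ V → (∀ x ∈ E, x ∉ X) →
      (1 - c) * ∑ u ∈ E, f {u} ≤ f (X ∪ E) - f X := by
    intro E
    induction E using Finset.induction_on with
    | empty => intro _ X hX _; simp
    | @insert u E' hnotmem ih =>
      intro hEV X hXV hdj
      have huV : u ∈ V := hEV (Finset.mem_insert_self u E')
      have hE'V : E' ⊆ V := (Finset.subset_insert u E').trans hEV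
      have hXE' : X ∪ E' ⊆ V.erase u := by
        apply Finset.subset_erase.mpr
        refine ⟨Finset.union_subset hXV hE'V, ?_⟩
        simp only [Finset.mem_union]
        rintro (h | h)
        · exact hdj u (Finset.mem_insert_self u E') h
        · exact hnotmem h
      have hcu := hcurv u huV (X ∪ E') ∅ hXE' (by simp)
      have hih := ih hE'V X hXV (fun x hx => hdj x (Finset.mem_insert_of_mem hx))
      rw [Finset.sum_insert hnotmem]
      have hins : X ∪ insert u E' = insert u (X ∪ E') := Finset.union_insert u X E'
      rw [hins]
      have hsing : (insert u ∅ : Finset γ) = {u} := by simp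
      rw [hsing, hempty] at hcu
      nlinarith [hcu, hih]
  -- Lemma R : removing D from S₂ loses at most (1/(1-c)) * sum of singleton values
  have lemR : ∀ D : Finset γ, D ⊆ S₂ → (1 - c) * (f S₂ - f (S₂ \ D)) ≤ ∑ v ∈ D, f {v} := by
    intro D
    induction D using Finset.induction_on with
    | empty => intro _; simp
    | @insert v D' hnotmem ih =>
      intro hDS
      have hvS₂ : v ∈ S₂ := hDS (Finset.mem_insert_self v D')
      have hvV : v ∈ V := hS₂V hvS₂
      have hD'S : D' ⊆ S₂ := (Finset.subset_insert v D').trans hDS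
      have hset : insert v (S₂ \ insert v D') = S₂ \ D' := by
        ext x
        simp only [Finset.mem_insert, Finset.mem_sdiff]
        constructor
        · rintro (rfl | ⟨h1, h2⟩)
          · exact ⟨hvS₂, hnotmem⟩
          · exact ⟨h1, fun h => h2 (Or.inr h)⟩
        · rintro ⟨h1, h2⟩
          by_cases hx : x = v
          · exact Or.inl hx
          · exact Or.inr ⟨h1, fun h => h.elim hx h2⟩
      have hsub : S₂ \ insert v D' ⊆ V.erase v := by
        apply Finset.subset_erase.mpr
        refine ⟨Finset.sdiff_subset.trans hS₂V, ?_⟩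
        simp [Finset.mem_sdiff]
      have hcu := hcurv v hvV ∅ (S₂ \ insert v D') (by simp) hsub
      rw [hset] at hcu
      have hih := ih hD'S
      rw [Finset.sum_insert hnotmem]
      have hsing : (insert v ∅ : Finset γ) = {v} := by simp
      rw [hsing, hempty] at hcu
      linarith
  -- Sum comparison using hbait
  have lemS : ∀ D E : Finset γ, D ⊆ S₂ → E ⊆ S₁ → D.card = E.card →
      ∑ v ∈ D, f {v} ≤ ∑ u ∈ E, f {u} := by
    intro D E hD hE hcard
    rcases D.eq_empty_or_nonempty with rfl | hDne
    · simp only [Finset.sum_empty]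
      exact Finset.sum_nonneg fun u hu =>
        hnonneg {u} (Finset.singleton_subset_iff.mpr (hS₁V (hE hu)))
    · have hEne : E.Nonempty := Finset.card_pos.mp (hcard ▸ Finset.card_pos.mpr hDne)
      set μ := E.inf' hEne (fun u => f {u}) with hμ
      have h1 : ∑ v ∈ D, f {v} ≤ D.card • μ := by
        apply Finset.sum_le_card_nsmul
        intro v hv
        apply Finset.le_inf'
        intro u hu
        exact hbait u (hE hu) v (hS₂ (hD hv))
      have h2 : E.card • μ ≤ ∑ u ∈ E, f {u} := by
        apply Finset.card_nsmul_le_sum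
        intro u hu
        exact Finset.inf'_le _ hu
      rw [hcard] at h1
      linarith [h1, h2]
  -- Core : any allowed removal from S₁ ∪ S₂ keeps (1-c)^2 * f S₂
  have core : ∀ B : Finset γ, B ⊆ S₁ ∪ S₂ → B.card ≤ b →
      (1 - c)^2 * f S₂ ≤ f ((S₁ ∪ S₂) \ B) := by
    intro B hB hBcard
    set D := B ∩ S₂ with hDdef
    have hDS₂ : D ⊆ S₂ := Finset.inter_subset_right
    have hdisjBB : Disjoint (B ∩ S₁) (B ∩ S₂) := by
      rw [Finset.disjoint_left]
      intro x hx1 hx2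
      exact hdisj x (Finset.mem_inter.mp hx2).2 (Finset.mem_inter.mp hx1).2
    have hsumcard : (B ∩ S₁).card + (B ∩ S₂).card ≤ b := by
      have hsubB : (B ∩ S₁) ∪ (B ∩ S₂) ⊆ B := by
        intro x hx
        rcases Finset.mem_union.mp hx with h | h
        · exact (Finset.mem_inter.mp h).1
        · exact (Finset.mem_inter.mp h).1
      calc (B ∩ S₁).card + (B ∩ S₂).card = ((B ∩ S₁) ∪ (B ∩ S₂)).card :=
            (Finset.card_union_of_disjoint hdisjBB).symm
        _ ≤ B.card := Finset.card_le_card hsubB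
        _ ≤ b := hBcard
    have hS₁cardB : (S₁ ∩ B).card + (S₁ \ B).card = b := by
      rw [Finset.card_inter_add_card_sdiff, hS₁card]
    have hDle : D.card ≤ (S₁ \ B).card := by
      have h1 : (S₁ ∩ B).card = (B ∩ S₁).card := by rw [Finset.inter_comm]
      have h2 : D.card = (B ∩ S₂).card := rfl
      omega
    obtain ⟨E, hE, hEcard⟩ := Finset.exists_subset_card_eq (s := S₁ \ B) (n := D.card) hDle
    have hES₁ : E ⊆ S₁ := hE.trans Finset.sdiff_subset
    have hmono1 : f ((S₂ \ D) ∪ E) ≤ f ((S₁ ∪ S₂) \ B) := by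
      apply hmono _ _ ?_ (Finset.sdiff_subset.trans hAV)
      intro x hx
      rcases Finset.mem_union.mp hx with h | h
      · have hh := Finset.mem_sdiff.mp h
        refine Finset.mem_sdiff.mpr ⟨Finset.mem_union_right _ hh.1, fun hxB => ?_⟩
        exact hh.2 (Finset.mem_inter.mpr ⟨hxB, hh.1⟩)
      · have hh := Finset.mem_sdiff.mp (hE h)
        exact Finset.mem_sdiff.mpr ⟨Finset.mem_union_left _ hh.1, hh.2⟩
    have hA := lemA E (hES₁.trans hS₁V) (S₂ \ D) (Finset.sdiff_subset.trans hS₂V)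
      (fun x hx hxX => hdisj x (Finset.mem_sdiff.mp hxX).1 (hES₁ hx))
    have hR := lemR D hDS₂
    have hSc := lemS D E hDS₂ hES₁ hEcard.symm
    have hnn : 0 ≤ f (S₂ \ D) := hnonneg _ (Finset.sdiff_subset.trans hS₂V)
    nlinarith [hA, hR, hSc, hnn, h1c, hmono1, hc0, hc1,
      mul_le_mul_of_nonneg_left hSc h1c, mul_le_mul_of_nonneg_left hR h1c,
      mul_nonneg (mul_nonneg hc0 (by linarith : (0:ℝ) ≤ 2 - c)) hnn]
  -- Step 2 : any candidate A' admits a removal B' with (1-c) f(A'\B') ≤ f S₂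
  have step2 : ∀ A' : Finset γ, A' ⊆ V → A'.card ≤ a →
      ∃ B', B' ⊆ A' ∧ B'.card ≤ b ∧ (1 - c) * f (A' \ B') ≤ f S₂ := by
    intro A' hA'V hA'card
    have hint : A' ∩ S₁ ⊆ A' := Finset.inter_subset_left
    have hc1' : (A' ∩ S₁).card ≤ b := by
      calc (A' ∩ S₁).card ≤ S₁.card := Finset.card_le_card Finset.inter_subset_right
        _ = b := hS₁card
    have hc2' : (A' ∩ S₁).card ≤ A'.card := Finset.card_le_card hint
    obtain ⟨B', hsub1, hsub2, hBcard⟩ := Finset.exists_subsuperset_card_eq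
      (n := min b A'.card - (A' ∩ S₁).card + (A' ∩ S₁).card) hint (by omega) (by omega)
    have hBcard' : B'.card = min b A'.card := by omega
    refine ⟨B', hsub2, by omega, ?_⟩
    have hPsub : A' \ B' ⊆ V \ S₁ := by
      intro x hx
      have hh := Finset.mem_sdiff.mp hx
      refine Finset.mem_sdiff.mpr ⟨hA'V hh.1, fun hxS₁ => ?_⟩
      exact hh.2 (hsub1 (Finset.mem_inter.mpr ⟨hh.1, hxS₁⟩))
    have hPcard : (A' \ B').card ≤ a - b := by
      rw [Finset.card_sdiff_of_subset hsub2]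
      omega
    exact hgreedy (A' \ B') hPsub hPcard
  -- Assemble
  rw [ge_iff_le]
  have hex : ∃ A'₀ ∈ V.powerset.filter (fun A' => A'.card ≤ a),
      (V.powerset.filter (fun A' => A'.card ≤ a)).sup'
        ⟨∅, Finset.mem_filter.mpr ⟨Finset.empty_mem_powerset _, by simp⟩⟩
        (fun A' =>
          (A'.powerset.filter (fun B' => B'.card ≤ b)).inf'
            ⟨∅, Finset.mem_filter.mpr ⟨Finset.empty_mem_powerset _, by simp⟩⟩
            (fun B' => f (A' \ B'))) =
      (A'₀.powerset.filter (fun B' => B'.card ≤ b)).inf'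
        ⟨∅, Finset.mem_filter.mpr ⟨Finset.empty_mem_powerset _, by simp⟩⟩
        (fun B' => f (A'₀ \ B')) :=
    Finset.exists_mem_eq_sup' _ _
  obtain ⟨A'₀, hA'₀mem, hsupeq⟩ := hex
  rw [hsupeq]
  apply Finset.le_inf'
  intro B hBmem
  have hBmem' := Finset.mem_filter.mp hBmem
  have hcore := core B (Finset.mem_powerset.mp hBmem'.1) hBmem'.2
  have hA'mem' := Finset.mem_filter.mp hA'₀mem
  obtain ⟨B', hB'sub, hB'card, hB'ineq⟩ :=
    step2 A'₀ (Finset.mem_powerset.mp hA'mem'.1) hA'mem'.2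
  have hinf_le : (A'₀.powerset.filter (fun B' => B'.card ≤ b)).inf'
      ⟨∅, Finset.mem_filter.mpr ⟨Finset.empty_mem_powerset _, by simp⟩⟩
      (fun B' => f (A'₀ \ B')) ≤ f (A'₀ \ B') :=
    Finset.inf'_le _ (Finset.mem_filter.mpr ⟨Finset.mem_powerset.mpr hB'sub, hB'card⟩)
  set I := (A'₀.powerset.filter (fun B' => B'.card ≤ b)).inf'
      ⟨∅, Finset.mem_filter.mpr ⟨Finset.empty_mem_powerset _, by simp⟩⟩
      (fun B' => f (A'₀ \ B')) with hI
  have h1 : (1 - c) * I ≤ f S₂ := by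
    calc (1 - c) * I ≤ (1 - c) * f (A'₀ \ B') := mul_le_mul_of_nonneg_left hinf_le h1c
      _ ≤ f S₂ := hB'ineq
  have h2 : (1 - c)^2 * ((1 - c) * I) ≤ (1 - c)^2 * f S₂ :=
    mul_le_mul_of_nonneg_left h1 (sq_nonneg _)
  calc (1 - c)^3 * I = (1 - c)^2 * ((1 - c) * I) := by ring
    _ ≤ (1 - c)^2 * f S₂ := h2
    _ ≤ f ((S₁ ∪ S₂) \ B) := hcore
end

section
/- Greedy guarantee used in Lemma 4 (single-step, curvature version): Let f : 2^K → ℝ be non-decreasing with f(∅)=0 and total curvature c_f on a finite ground set K, let δ ≤ |K|, and let M = {m₁,…,m_δ} be constructed greedily: m_i maximizes f({m₁,…,m_{i-1}} ∪ {y}) over y ∈ K \ {m₁,…,m_{i-1}}. Then for any P ⊆ K with |P| ≤ δ, f(M) ≥ (1 - c_f)²·f(P). -/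
lemma fin_strictMono_le {n N : ℕ} (g : Fin n → Fin N) (hg : StrictMono g) (i : Fin n) :
    (i : ℕ) ≤ (g i : ℕ) := by
  obtain ⟨iv, hiv⟩ := i
  induction iv with
  | zero => exact Nat.zero_le _
  | succ k ih =>
    have hk : k < n := Nat.lt_of_succ_lt hiv
    have h1 : (g ⟨k, hk⟩ : ℕ) < (g ⟨k+1, hiv⟩ : ℕ) :=
      hg (show (⟨k, hk⟩ : Fin n) < ⟨k+1, hiv⟩ from Fin.mk_lt_mk.2 (Nat.lt_succ_self k))
    have h2 := ih hk
    simp only [Fin.val_mk] at h2 ⊢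
    omega

theorem stmt_19 {γ : Type*} [DecidableEq γ] (K : Finset γ) (f : Finset γ → ℝ) (c : ℝ)
    (hmono : ∀ A B : Finset γ, A ⊆ B → B ⊆ K → f A ≤ f B)
    (hempty : f ∅ = 0)
    (hc0 : 0 ≤ c) (hc1 : c ≤ 1)
    (hcurv : ∀ v ∈ K, ∀ A B : Finset γ, A ⊆ K.erase v → B ⊆ K.erase v →
      f (insert v A) - f A ≥ (1 - c) * (f (insert v B) - f B))
    (d : ℕ) (hd : 0 < d) (hdK : d ≤ K.card)
    (m : Fin d → γ) (hinj : Function.Injective m) (hmK : ∀ i, m i ∈ K)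
    (hgreedy : ∀ i : Fin d, ∀ y ∈ K,
      y ∉ (Finset.univ.filter (fun j => j < i)).image m →
      f (insert (m i) ((Finset.univ.filter (fun j => j < i)).image m)) ≥
      f (insert y ((Finset.univ.filter (fun j => j < i)).image m)))
    (P : Finset γ) (hP : P ⊆ K) (hPcard : P.card ≤ d) :
    f ((Finset.univ : Finset (Fin d)).image m) ≥ (1 - c) ^ 2 * f P := by
  classical
  set M : Finset γ := (Finset.univ : Finset (Fin d)).image m with hMdef
  set S : Finset (Fin d) := Finset.univ.filter (fun j : Fin d => m j ∈ P) with hSdef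
  set L1 : List γ := (S.sort (· ≤ ·)).map m with hL1def
  set L2 : List γ := (P \ M).toList with hL2def
  set LP : List γ := L1 ++ L2 with hLPdef
  have hL1mem : ∀ x ∈ L1, x ∈ M ∩ P := by
    intro x hx
    rw [hL1def, List.mem_map] at hx
    obtain ⟨j, hj, rfl⟩ := hx
    rw [Finset.mem_sort, hSdef, Finset.mem_filter] at hj
    exact Finset.mem_inter.2 ⟨Finset.mem_image.2 ⟨j, Finset.mem_univ j, rfl⟩, hj.2⟩
  have hL2mem : ∀ x ∈ L2, x ∈ P \ M := fun x hx => Finset.mem_toList.1 hx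
  have hLPnodup : LP.Nodup := by
    refine List.Nodup.append ?_ (Finset.nodup_toList _) ?_
    · exact (Finset.sort_nodup _ _).map hinj
    · intro x hx1 hx2
      have := hL1mem x hx1
      have := hL2mem x hx2
      simp only [Finset.mem_inter, Finset.mem_sdiff] at *
      tauto
  have hL1fin : L1.toFinset = M ∩ P := by
    apply Finset.Subset.antisymm
    · intro x hx; exact hL1mem x (List.mem_toFinset.1 hx)
    · intro x hx
      rw [Finset.mem_inter, hMdef, Finset.mem_image] at hx
      obtain ⟨⟨j, _, rfl⟩, hxP⟩ := hx
      rw [List.mem_toFinset, hL1def, List.mem_map]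
      refine ⟨j, ?_, rfl⟩
      rw [Finset.mem_sort, hSdef, Finset.mem_filter]
      exact ⟨Finset.mem_univ j, hxP⟩
  have hLPfin : LP.toFinset = P := by
    rw [hLPdef, List.toFinset_append, hL1fin, hL2def, Finset.toList_toFinset,
      Finset.inter_comm, Finset.union_comm, Finset.sdiff_union_inter]
  have hlen : LP.length = P.card := by
    have h1 : L1.length = (P ∩ M).card := by
      rw [hL1def, List.length_map, Finset.length_sort]
      have himg : S.image m = P ∩ M := by
        ext x
        constructor
        · intro hx
          obtain ⟨j, hj, rfl⟩ := Finset.mem_image.1 hx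
          exact Finset.mem_inter.2 ⟨(Finset.mem_filter.1 hj).2,
            Finset.mem_image.2 ⟨j, Finset.mem_univ j, rfl⟩⟩
        · intro hx
          obtain ⟨hxP, hxM⟩ := Finset.mem_inter.1 hx
          obtain ⟨j, _, rfl⟩ := Finset.mem_image.1 hxM
          exact Finset.mem_image.2 ⟨j, Finset.mem_filter.2 ⟨Finset.mem_univ j, hxP⟩, rfl⟩
      rw [← Finset.card_image_of_injective S hinj, himg]
    rw [hLPdef, List.length_append, h1, hL2def, Finset.length_toList]
    exact Finset.card_inter_add_card_sdiff P M
  -- prefix sets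
  set Ms : ℕ → Finset γ := fun n => (Finset.univ.filter (fun j : Fin d => (j : ℕ) < n)).image m
    with hMsdef
  set Ps : ℕ → Finset γ := fun n => (LP.take n).toFinset with hPsdef
  have hMs0 : Ms 0 = ∅ := by simp [hMsdef]
  have hPs0 : Ps 0 = ∅ := by simp [hPsdef]
  have hMsd : Ms d = M := by
    simp only [hMsdef, hMdef]
    congr 1
    ext j
    simp [j.isLt]
  have hPsP : ∀ n, P.card ≤ n → Ps n = P := by
    intro n hn
    simp only [hPsdef]
    rw [List.take_of_length_le (by omega), hLPfin]
  have hMsK : ∀ n, Ms n ⊆ K := by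
    intro n x hx
    simp only [hMsdef, Finset.mem_image] at hx
    obtain ⟨j, _, rfl⟩ := hx
    exact hmK j
  have hPsK : ∀ n, Ps n ⊆ K := by
    intro n x hx
    apply hP
    rw [← hLPfin]
    exact List.mem_toFinset.2 ((LP.take_sublist n).subset (List.mem_toFinset.1 hx))
  have hMsmono : ∀ n, Ms n ⊆ Ms (n+1) := by
    intro n x hx
    simp only [hMsdef, Finset.mem_image, Finset.mem_filter] at hx ⊢
    obtain ⟨j, hj, rfl⟩ := hx
    exact ⟨j, ⟨hj.1, by omega⟩, rfl⟩
  have hMssucc : ∀ (i : ℕ) (hi : i < d), Ms (i+1) = insert (m ⟨i, hi⟩) (Ms i) := by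
    intro i hi
    ext x
    simp only [hMsdef, Finset.mem_image, Finset.mem_filter, Finset.mem_insert, Finset.mem_univ,
      true_and]
    constructor
    · rintro ⟨j, hj, rfl⟩
      rcases Nat.lt_succ_iff_lt_or_eq.1 hj with h | h
      · exact Or.inr ⟨j, h, rfl⟩
      · exact Or.inl (by congr 1; exact Fin.ext h)
    · rintro (rfl | ⟨j, hj, rfl⟩)
      · exact ⟨⟨i, hi⟩, by simp, rfl⟩
      · exact ⟨j, by omega, rfl⟩
  -- key step inequality
  have key : ∀ i ∈ Finset.range d,
      (1 - c) ^ 2 * (f (Ps (i+1)) - f (Ps i)) ≤ f (Ms (i+1)) - f (Ms i) := by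
    intro i hi'
    rw [Finset.mem_range] at hi'
    rename' hi' => hi
    by_cases hik : i < P.card
    · have hiL : i < LP.length := by omega
      set x : γ := LP[i]'hiL with hxdef
      have hxLP : x ∈ LP := List.getElem_mem _
      have hxP : x ∈ P := by rw [← hLPfin]; exact List.mem_toFinset.2 hxLP
      have hxK : x ∈ K := hP hxP
      have hxPs : x ∉ Ps i := by
        intro hmem
        have h1 : x ∈ LP.take i := List.mem_toFinset.1 hmem
        have h2 : x ∈ LP.drop i := by
          have hg : (LP.drop i)[0]'(by simp; omega) = LP[i]'hiL := by
            rw [List.getElem_drop]; simp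
          rw [hxdef, ← hg]
          exact List.getElem_mem _
        exact List.disjoint_take_drop hLPnodup (le_refl i) h1 h2
      have hPssucc : Ps (i+1) = insert x (Ps i) := by
        simp only [hPsdef]
        ext y
        simp only [List.mem_toFinset, Finset.mem_insert, List.take_succ,
          List.getElem?_eq_getElem hiL, List.mem_append, Option.toList_some, List.mem_singleton]
        tauto
      have hxMs : x ∉ Ms i := by
        by_cases hiT : i < L1.length
        · have hxL1 : x = L1[i]'hiT := List.getElem_append_left hiT
          have hiS : i < (S.sort (· ≤ ·)).length := by
            rw [hL1def, List.length_map] at hiT; exact hiT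
          set j : Fin d := (S.sort (· ≤ ·))[i]'hiS with hjdef
          have hxj : x = m j := hxL1.trans (List.getElem_map m)
          have hij : i ≤ (j : ℕ) := by
            have hs := (Finset.sortedLT_sort S).strictMono_get
            have := fin_strictMono_le _ hs ⟨i, hiS⟩
            simpa [List.get_eq_getElem] using this
          intro hmem
          simp only [hMsdef, Finset.mem_image, Finset.mem_filter, Finset.mem_univ, true_and]
            at hmem
          obtain ⟨j', hj', hj'x⟩ := hmem
          rw [hxj] at hj'x
          have hvv := congrArg Fin.val (hinj hj'x)
          omega
        · have hiR : L1.length ≤ i := by omega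
          have hiL2 : i - L1.length < L2.length := by
            rw [hLPdef, List.length_append] at hiL; omega
          have hxL2 : x ∈ L2 := by
            have hxe : x = L2[i - L1.length]'hiL2 := List.getElem_append_right hiR
            rw [hxe]
            exact List.getElem_mem _
          have hxPM : x ∈ P \ M := hL2mem x hxL2
          intro hmem
          have hxM : x ∈ M := by
            simp only [hMsdef, Finset.mem_image, Finset.mem_filter] at hmem
            obtain ⟨j, _, hjx⟩ := hmem
            exact hjx ▸ Finset.mem_image.2 ⟨j, Finset.mem_univ j, rfl⟩
          exact (Finset.mem_sdiff.1 hxPM).2 hxM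
      -- greedy step
      have hfil : (Finset.univ.filter (fun j : Fin d => j < (⟨i, hi⟩ : Fin d))).image m
          = Ms i := by
        ext y
        simp only [hMsdef, Finset.mem_image, Finset.mem_filter, Finset.mem_univ, true_and,
          Fin.lt_def]
      have hstep1 : f (insert (m ⟨i, hi⟩) (Ms i)) ≥ f (insert x (Ms i)) := by
        have := hgreedy ⟨i, hi⟩ x hxK (by rw [hfil]; exact hxMs)
        rwa [hfil] at this
      have hMsub : Ms i ⊆ K.erase x := fun y hy =>
        Finset.mem_erase.2 ⟨fun h => hxMs (h ▸ hy), hMsK i hy⟩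
      have hPsub : Ps i ⊆ K.erase x := fun y hy =>
        Finset.mem_erase.2 ⟨fun h => hxPs (h ▸ hy), hPsK i hy⟩
      have hstep2 := hcurv x hxK (Ms i) (Ps i) hMsub hPsub
      have hstep3 : 0 ≤ f (insert x (Ps i)) - f (Ps i) := by
        have := hmono (Ps i) (insert x (Ps i)) (Finset.subset_insert _ _)
          (Finset.insert_subset hxK (hPsK i))
        linarith
      rw [hMssucc i hi, hPssucc]
      nlinarith [mul_nonneg (mul_nonneg hc0 (by linarith : (0:ℝ) ≤ 1 - c)) hstep3]
    · have hPsi : Ps i = P := hPsP i (by omega)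
      have hPsi1 : Ps (i+1) = P := hPsP (i+1) (by omega)
      have h0 : f (Ms i) ≤ f (Ms (i+1)) := hmono _ _ (hMsmono i) (hMsK (i+1))
      rw [hPsi, hPsi1]
      have hz : (1 - c) ^ 2 * (f P - f P) = 0 := by ring
      rw [hz]
      linarith
  have hsum := Finset.sum_le_sum key
  have hA : ∑ i ∈ Finset.range d, (f (Ms (i+1)) - f (Ms i)) = f (Ms d) - f (Ms 0) :=
    Finset.sum_range_sub (fun n => f (Ms n)) d
  have hB : ∑ i ∈ Finset.range d, (f (Ps (i+1)) - f (Ps i)) = f (Ps d) - f (Ps 0) :=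
    Finset.sum_range_sub (fun n => f (Ps n)) d
  rw [hA, ← Finset.mul_sum, hB] at hsum
  rw [hMs0, hPs0, hempty, hMsd, hPsP d hPcard] at hsum
  have : (1 - c) ^ 2 * (f P - 0) = (1 - c) ^ 2 * f P := by ring
  rw [this] at hsum
  linarith
end
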